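/- Let A ∈ {-1,+1} with P(A=1)=π ∈ (0,1), Y nonnegative and integrable, and φ convex, differentiable at 0 with φ'(0)<0. Define π_A = π if A=1 and 1−π otherwise, and S(w) = E[Y·φ(A·w)/π_A]. If E[Y|A=1] ≠ E[Y|A=-1], then every minimizer w* of S over ℝ satisfies sign(w*) = sign(E[Y|A=1] − E[Y|A=-1]). -/

import Mathlib

/-!
Splitting the expectation over `A = 1` and `A = -1` turns `S` into `a₁ φ(w) + a₂ φ(-w)` with
`a₁, a₂ ≥ 0` the inverse-propensity-weighted conditional means. This is convex with derivative
`(a₁ - a₂) φ'(0)` at `0`, and a global minimizer of a convex function lies on the side of `0`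
towards which the function decreases.
-/

open MeasureTheory Set

theorem ConvexOn.lt_of_isMinOn_of_hasDerivAt_neg {f : ℝ → ℝ} {x w D : ℝ}
    (hf : ConvexOn ℝ univ f) (hw : IsMinOn f univ w) (hD : HasDerivAt f D x) (hneg : D < 0) :
    x < w := by
  rcases lt_trichotomy w x with hwx | rfl | hxw
  · have hslope : 0 ≤ slope f w x := by
      rw [slope_def_field]
      exact div_nonneg (sub_nonneg.2 (hw (mem_univ x))) (sub_nonneg.2 hwx.le)
    linarith [hf.slope_le_of_hasDerivAt (mem_univ w) (mem_univ x) hwx hD]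
  · exact absurd ((hw.isLocalMin Filter.univ_mem).hasDerivAt_eq_zero hD) hneg.ne
  · exact hxw

theorem ConvexOn.lt_of_isMinOn_of_hasDerivAt_pos {f : ℝ → ℝ} {x w D : ℝ}
    (hf : ConvexOn ℝ univ f) (hw : IsMinOn f univ w) (hD : HasDerivAt f D x) (hpos : 0 < D) :
    w < x := by
  rcases lt_trichotomy w x with hwx | rfl | hxw
  · exact hwx
  · exact absurd ((hw.isLocalMin Filter.univ_mem).hasDerivAt_eq_zero hD) hpos.ne'
  · have hslope : slope f x w ≤ 0 := by
      rw [slope_def_field]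
      exact div_nonpos_of_nonpos_of_nonneg (sub_nonpos.2 (hw (mem_univ x))) (sub_nonneg.2 hxw.le)
    linarith [hf.le_slope_of_hasDerivAt (mem_univ x) (mem_univ w) hxw hD]

theorem sign_eq_sign_sub_of_isMinOn_mul_add_mul_neg {φ : ℝ → ℝ} (hφ : ConvexOn ℝ univ φ)
    {d : ℝ} (hd : HasDerivAt φ d 0) (hdneg : d < 0) {a₁ a₂ : ℝ} (ha₁ : 0 ≤ a₁) (ha₂ : 0 ≤ a₂)
    (hne : a₁ ≠ a₂) {w : ℝ} (hw : IsMinOn (fun v ↦ a₁ * φ v + a₂ * φ (-v)) univ w) :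
    Real.sign w = Real.sign (a₁ - a₂) := by
  have hconv : ConvexOn ℝ univ (fun v ↦ a₁ * φ v + a₂ * φ (-v)) :=
    (hφ.smul ha₁).add ((hφ.comp_linearMap (-LinearMap.id)).smul ha₂)
  have hderiv : HasDerivAt (fun v ↦ a₁ * φ v + a₂ * φ (-v)) ((a₁ - a₂) * d) 0 := by
    have hφneg : HasDerivAt (fun v ↦ φ (-v)) (-d) 0 := by
      have hd' : HasDerivAt φ d (-0) := by rwa [neg_zero]
      simpa [Function.comp_def] using hd'.comp 0 (hasDerivAt_neg (0 : ℝ))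
    rw [show (a₁ - a₂) * d = a₁ * d + a₂ * -d by ring]
    exact (hd.const_mul a₁).add (hφneg.const_mul a₂)
  rcases hne.lt_or_gt with hlt | hgt
  · have hw_neg := hconv.lt_of_isMinOn_of_hasDerivAt_pos hw hderiv
      (mul_pos_of_neg_of_neg (sub_neg.2 hlt) hdneg)
    rw [Real.sign_of_neg hw_neg, Real.sign_of_neg (sub_neg.2 hlt)]
  · have hw_pos := hconv.lt_of_isMinOn_of_hasDerivAt_neg hw hderiv
      (mul_neg_of_pos_of_neg (sub_pos.2 hgt) hdneg)
    rw [Real.sign_of_pos hw_pos, Real.sign_of_pos (sub_pos.2 hgt)]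

theorem integral_mul_comp_of_eq_one_or_neg_one {Ω : Type*} [MeasurableSpace Ω] {μ : Measure Ω}
    {A Y : Ω → ℝ} (hA : Measurable A) (hAval : ∀ ω, A ω = 1 ∨ A ω = -1) (hY : Integrable Y μ)
    (g : ℝ → ℝ) :
    ∫ ω, Y ω * g (A ω) ∂μ =
      (∫ ω in {ω | A ω = 1}, Y ω ∂μ) * g 1 + (∫ ω in {ω | A ω = -1}, Y ω ∂μ) * g (-1) := by
  classical
  have hs : MeasurableSet {ω | A ω = 1} := hA (measurableSet_singleton 1)
  have hcompl : {ω | A ω = 1}ᶜ = {ω | A ω = -1} := by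
    ext ω
    rcases hAval ω with h | h <;> simp [h] <;> norm_num
  have hpw : (fun ω ↦ Y ω * g (A ω)) =
      {ω | A ω = 1}.piecewise (fun ω ↦ Y ω * g 1) (fun ω ↦ Y ω * g (-1)) := by
    funext ω
    by_cases h : A ω = 1
    · rw [piecewise_eq_of_mem _ _ _ (show ω ∈ {ω | A ω = 1} from h), h]
    · rw [piecewise_eq_of_notMem _ _ _ (show ω ∉ {ω | A ω = 1} from h),
        (hAval ω).resolve_left h]
  rw [hpw, integral_piecewise hs (hY.mul_const _).integrableOn (hY.mul_const _).integrableOn,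
    integral_mul_const, integral_mul_const, hcompl]

theorem stmt_17_general {Ω : Type*} [MeasurableSpace Ω] (μ : Measure Ω)
    (A Y : Ω → ℝ) (hA : Measurable A)
    (hAval : ∀ ω, A ω = 1 ∨ A ω = -1)
    (π : ℝ) (hπ0 : 0 < π) (hπ1 : π < 1)
    (hYpos : ∀ ω, 0 ≤ Y ω) (hYint : Integrable Y μ)
    (φ : ℝ → ℝ) (hconv : ConvexOn ℝ Set.univ φ)
    (d : ℝ) (hd : HasDerivAt φ d 0) (hdneg : d < 0)
    (πA : Ω → ℝ) (hπA : ∀ ω, πA ω = if A ω = 1 then π else 1 - π)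
    (S : ℝ → ℝ) (hS : ∀ w, S w = ∫ ω, Y ω * φ (A ω * w) / πA ω ∂μ)
    (hne : (∫ ω in {ω | A ω = 1}, Y ω ∂μ) / π ≠
      (∫ ω in {ω | A ω = -1}, Y ω ∂μ) / (1 - π)) :
    ∀ w : ℝ, (∀ v : ℝ, S w ≤ S v) →
      Real.sign w = Real.sign ((∫ ω in {ω | A ω = 1}, Y ω ∂μ) / π -
        (∫ ω in {ω | A ω = -1}, Y ω ∂μ) / (1 - π)) := by
  intro w hw
  have hS_eq : ∀ v, S v = (∫ ω in {ω | A ω = 1}, Y ω ∂μ) / π * φ v +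
      (∫ ω in {ω | A ω = -1}, Y ω ∂μ) / (1 - π) * φ (-v) := by
    intro v
    have h := integral_mul_comp_of_eq_one_or_neg_one (μ := μ) hA hAval hYint
      (fun a ↦ φ (a * v) / if a = 1 then π else 1 - π)
    simp_rw [hS, hπA, mul_div_assoc]
    rw [h, if_pos rfl, if_neg (by norm_num), one_mul, neg_one_mul]
    ring
  exact sign_eq_sign_sub_of_isMinOn_mul_add_mul_neg hconv hd hdneg
    (div_nonneg (integral_nonneg hYpos) hπ0.le) (div_nonneg (integral_nonneg hYpos) (by linarith))
    hne (isMinOn_univ_iff.2 fun v ↦ by simpa only [hS_eq] using hw v)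

/-- Scalar Theorem 1 (Fisher consistency of OWL with convex surrogate loss):
for nonnegative `Y` and convex `φ` with `φ'(0) < 0`, any minimizer of
`S w = E[Y φ(A w) / π_A]` has the same sign as `E[Y|A=1] - E[Y|A=-1]`. -/
theorem stmt_17 {Ω : Type*} [MeasurableSpace Ω] (μ : Measure Ω) [IsProbabilityMeasure μ]
    (A Y : Ω → ℝ) (hA : Measurable A) (hY : Measurable Y)
    (hAval : ∀ ω, A ω = 1 ∨ A ω = -1)
    (π : ℝ) (hπ0 : 0 < π) (hπ1 : π < 1)
    (hπ : μ {ω | A ω = 1} = ENNReal.ofReal π)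
    (hYpos : ∀ ω, 0 ≤ Y ω) (hYint : Integrable Y μ)
    (φ : ℝ → ℝ) (hconv : ConvexOn ℝ Set.univ φ)
    (d : ℝ) (hd : HasDerivAt φ d 0) (hdneg : d < 0)
    (πA : Ω → ℝ) (hπA : ∀ ω, πA ω = if A ω = 1 then π else 1 - π)
    (S : ℝ → ℝ) (hS : ∀ w, S w = ∫ ω, Y ω * φ (A ω * w) / πA ω ∂μ)
    (hne : (∫ ω in {ω | A ω = 1}, Y ω ∂μ) / π ≠
      (∫ ω in {ω | A ω = -1}, Y ω ∂μ) / (1 - π)) :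
    ∀ w : ℝ, (∀ v : ℝ, S w ≤ S v) →
      Real.sign w = Real.sign ((∫ ω in {ω | A ω = 1}, Y ω ∂μ) / π -
        (∫ ω in {ω | A ω = -1}, Y ω ∂μ) / (1 - π)) :=
  stmt_17_general μ A Y hA hAval π hπ0 hπ1 hYpos hYint φ hconv d hd hdneg πA hπA S hS hne
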